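/- arXiv:0912.2737 — 5 statements merged into one kernel-verified Lean document; each statement's English description precedes it below -/
import Mathlib

section
/- Let dA be a positive integer and let S be a subspace of dA×dA complex matrices (identified with a subspace of ℂ^{dA} ⊗ ℂ^{dA}) such that: (a) S is strongly unextendible; (b) the Frobenius orthocomplement S^⊥ is strongly unextendible; (c) S is closed under conjugate transpose; (d) the set SX = {MX : M ∈ S} is closed under conjugate transpose; (e) S is spanned by positive semidefinite matrices; (f) the set S^⊥X = {NX : N ∈ S^⊥} is spanned by positive semidefinite matrices. Then there exist quantum channels E1, E2 with input dimension dA such that for every integer n ≥ 1, for i = 1,2, and all nonzero vectors ψ, φ in (ℂ^{dA})^{⊗n}, tr[E_i^{⊗n}(ψψᴴ) · E_i^{⊗n}(φφᴴ)] ≠ 0 (each channel has no zero-error classical capacity), while there exist nonzero vectors ψ, φ in ℂ^{dA} ⊗ ℂ^{dA} with tr[(E1 ⊗ E2)(ψψᴴ) · (E1 ⊗ E2)(φφᴴ)] = 0 (the joint channel has positive one-shot classical zero-error capacity). -/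
open Matrix
open scoped ComplexOrder

noncomputable section

/-- A family of Kraus operators for a quantum channel:
`∑ k, (A k)ᴴ * A k = 1` (trace preservation). -/
def IsKraus {ι m n : Type*} [Fintype ι] [Fintype m] [Fintype n] [DecidableEq m]
    (A : ι → Matrix n m ℂ) : Prop :=
  ∑ k, (A k)ᴴ * A k = 1

/-- Application of the channel with Kraus operators `A`: `ρ ↦ ∑ k, A k * ρ * (A k)ᴴ`. -/
def applyKraus {ι m n : Type*} [Fintype ι] [Fintype m]
    (A : ι → Matrix n m ℂ) (ρ : Matrix m m ℂ) : Matrix n n ℂ :=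
  ∑ k, A k * ρ * (A k)ᴴ

/-- Kraus operators of the `N`-th tensor power of a channel: all `N`-fold
Kronecker products of Kraus operators of the original channel. -/
def powKraus {κ a b : ℕ} (A : Fin κ → Matrix (Fin a) (Fin b) ℂ) (N : ℕ) :
    (Fin N → Fin κ) → Matrix (Fin N → Fin a) (Fin N → Fin b) ℂ :=
  fun f => Matrix.of fun i j => ∏ t, A (f t) (i t) (j t)

/-- Kraus operators of the tensor product of two channels: Kronecker products of
the Kraus operators of the two channels. -/
def jointKraus {κ₁ κ₂ a₁ b₁ a₂ b₂ : ℕ}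
    (A : Fin κ₁ → Matrix (Fin a₁) (Fin b₁) ℂ) (B : Fin κ₂ → Matrix (Fin a₂) (Fin b₂) ℂ) :
    Fin κ₁ × Fin κ₂ → Matrix (Fin a₁ × Fin a₂) (Fin b₁ × Fin b₂) ℂ :=
  fun k => Matrix.kroneckerMap (· * ·) (A k.1) (B k.2)

/-- The rank-one matrix `ψψᴴ` associated to a vector `ψ`. -/
def outer {α : Type*} (ψ : α → ℂ) : Matrix α α ℂ :=
  Matrix.vecMulVec ψ (star ψ)

/-- The channel with Kraus operators `A : ℂ^b → ℂ^a` has no zero-error classical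
capacity: for every `N ≥ 1` and all nonzero inputs `ψ, φ` to the `N`-th tensor power,
the outputs are non-orthogonal. -/
def NoZeroError {κ a b : ℕ} (A : Fin κ → Matrix (Fin a) (Fin b) ℂ) : Prop :=
  ∀ N : ℕ, 1 ≤ N → ∀ ψ φ : (Fin N → Fin b) → ℂ, ψ ≠ 0 → φ ≠ 0 →
    Matrix.trace (applyKraus (powKraus A N) (outer ψ) *
      applyKraus (powKraus A N) (outer φ)) ≠ 0

/-- Frobenius (Hilbert-Schmidt) inner product `⟨M, N⟩ = tr(Mᴴ N)`. -/
def frobInner {α β : Type*} [Fintype α] [Fintype β] (M N : Matrix α β ℂ) : ℂ :=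
  Matrix.trace (Mᴴ * N)

/-- Frobenius orthogonal complement of a set of matrices. -/
def frobOrthSet {α β : Type*} [Fintype α] [Fintype β] (S : Set (Matrix α β ℂ)) :
    Set (Matrix α β ℂ) :=
  {N | ∀ M ∈ S, frobInner M N = 0}

/-- `k`-fold Kronecker product of a family of matrices. -/
def kronPow {a b : ℕ} (k : ℕ) (M : Fin k → Matrix (Fin a) (Fin b) ℂ) :
    Matrix (Fin k → Fin a) (Fin k → Fin b) ℂ :=
  Matrix.of fun i j => ∏ t, M t (i t) (j t)

/-- A set `S` of `a×b` matrices is `k`-unextendible if no nonzero matrix of rank at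
most one (equivalently, no nonzero outer product `u vᵀ`) is Frobenius-orthogonal to
`S^{⊗k}`, i.e. to every `k`-fold Kronecker product of elements of `S`. -/
def KUnextendible {a b : ℕ} (S : Set (Matrix (Fin a) (Fin b) ℂ)) (k : ℕ) : Prop :=
  ∀ (u : (Fin k → Fin a) → ℂ) (v : (Fin k → Fin b) → ℂ), u ≠ 0 → v ≠ 0 →
    ∃ M : Fin k → Matrix (Fin a) (Fin b) ℂ, (∀ t, M t ∈ S) ∧
      frobInner (kronPow k M) (Matrix.vecMulVec u v) ≠ 0

/-- A set of matrices is strongly unextendible if it is `k`-unextendible for all `k ≥ 1`. -/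
def StronglyUnextendible {a b : ℕ} (S : Set (Matrix (Fin a) (Fin b) ℂ)) : Prop :=
  ∀ k : ℕ, 1 ≤ k → KUnextendible S k

/-- The `n×n` matrix with ones on the anti-diagonal and zeros elsewhere. -/
def Xmat (n : ℕ) : Matrix (Fin n) (Fin n) ℂ :=
  Matrix.of fun i j => if (i : ℕ) + (j : ℕ) = n - 1 then 1 else 0


/-!
Pick finite families of positive semidefinite matrices `P k` spanning `S` and `R l` spanning
`S^⊥ X`. Strong unextendibility passes from `S` to `{P k}` (multilinearity of `kronPow`) and
from `S^⊥` to `{R l}` (right multiplication by the invertible `X`), and survives congruence and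
transposition. For `k = 1` it forces `∑ P k` to be positive definite, so some invertible `W` has
`Wᴴ (∑ P k) W = 1`; stacking square roots of the `Wᴴ P k W` in orthogonal blocks of output rows
gives a channel with `(A k)ᴴ A l = δ k l • Wᴴ P k W`. Two outputs of its `N`-th power are
orthogonal only if `⟪ψ, (Wᴴ P W)^{⊗F} φ⟫ = 0` for every `F`, which strong unextendibility
excludes.

The first channel uses the transposed family, so that by `(M ⊗ₖ N) vec Φ = vec (N Φ Mᵀ)` the
amplitudes of the joint channel on `vec (V⁻¹ W⁻¹ᴴ)` and `vec (V⁻¹ X W⁻¹ᴴ)` collapse to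
`tr (R l X P k)`. Writing `R l = K X` with `K ⊥ S`, this is `tr (K P k) = ⟪P k, K⟫ = 0`.
-/

open scoped Kronecker

section KronPow

variable {a b c k : ℕ}

lemma kronPow_mul (M : Fin k → Matrix (Fin a) (Fin b) ℂ) (N : Fin k → Matrix (Fin b) (Fin c) ℂ) :
    kronPow k M * kronPow k N = kronPow k (fun t => M t * N t) := by
  ext i j
  simp only [mul_apply, kronPow, of_apply, Fintype.prod_sum, Finset.prod_mul_distrib]

lemma kronPow_conjTranspose (M : Fin k → Matrix (Fin a) (Fin b) ℂ) :
    (kronPow k M)ᴴ = kronPow k (fun t => (M t)ᴴ) := by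
  ext i j
  simp only [conjTranspose_apply, kronPow, of_apply, star_prod]

lemma kronPow_transpose (M : Fin k → Matrix (Fin a) (Fin b) ℂ) :
    (kronPow k M)ᵀ = kronPow k (fun t => (M t)ᵀ) :=
  rfl

lemma kronPow_one : kronPow k (fun _ => (1 : Matrix (Fin a) (Fin a) ℂ)) = 1 := by
  ext i j
  by_cases hij : i = j
  · simp [kronPow, hij, one_apply]
  · obtain ⟨t, ht⟩ := Function.ne_iff.mp hij
    rw [one_apply_ne hij]
    exact Finset.prod_eq_zero (Finset.mem_univ t) (one_apply_ne ht)

lemma isUnit_kronPow_const {L : Matrix (Fin a) (Fin a) ℂ} (hL : IsUnit L) :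
    IsUnit (kronPow k fun _ => L) := by
  obtain ⟨L', hL'⟩ := hL.exists_right_inv
  exact .of_mul_eq_one (kronPow k fun _ => L') (by simp only [kronPow_mul, hL', kronPow_one])

lemma kronPow_sum_smul {r : ℕ} (c : Fin k → Fin r → ℂ) (P : Fin r → Matrix (Fin a) (Fin b) ℂ) :
    kronPow k (fun t => ∑ α, c t α • P α) =
      ∑ F : Fin k → Fin r, (∏ t, c t (F t)) • kronPow k (fun t => P (F t)) := by
  ext i j
  simp only [kronPow, of_apply, Matrix.sum_apply, Matrix.smul_apply, smul_eq_mul,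
    Fintype.prod_sum, Finset.prod_mul_distrib]

lemma kronPow_fin_one (M : Fin 1 → Matrix (Fin a) (Fin b) ℂ) :
    kronPow 1 M =
      (M 0).submatrix (Equiv.funUnique (Fin 1) (Fin a)) (Equiv.funUnique (Fin 1) (Fin b)) := by
  ext i j
  simp [kronPow]

end KronPow

lemma frobInner_vecMulVec {α β : Type*} [Fintype α] [Fintype β] (A : Matrix α β ℂ)
    (u : α → ℂ) (v : β → ℂ) :
    frobInner A (vecMulVec u v) = star (star u ⬝ᵥ A *ᵥ star v) := by
  rw [frobInner, mul_vecMulVec, trace_vecMulVec, ← star_star v, dotProduct_star, star_mulVec,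
    conjTranspose_conjTranspose, star_star, dotProduct_comm, dotProduct_mulVec]

lemma conjTranspose_mulVec_dotProduct {m n : Type*} [Fintype m] [Fintype n]
    (A : Matrix m n ℂ) (x : m → ℂ) (y : n → ℂ) :
    star (Aᴴ *ᵥ x) ⬝ᵥ y = star x ⬝ᵥ A *ᵥ y := by
  rw [star_mulVec, conjTranspose_conjTranspose, dotProduct_mulVec]

lemma mulVec_ne_zero_of_isUnit {n : Type*} [Fintype n] [DecidableEq n] {A : Matrix n n ℂ}
    (hA : IsUnit A) {x : n → ℂ} (hx : x ≠ 0) : A *ᵥ x ≠ 0 :=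
  fun h => hx (mulVec_injective_iff_isUnit.mpr hA (h.trans (mulVec_zero A).symm))

section Unextendible

variable {a b k : ℕ} {S : Set (Matrix (Fin a) (Fin b) ℂ)}

lemma kUnextendible_iff : KUnextendible S k ↔
    ∀ (x : (Fin k → Fin a) → ℂ) (y : (Fin k → Fin b) → ℂ), x ≠ 0 → y ≠ 0 →
      ∃ M : Fin k → Matrix (Fin a) (Fin b) ℂ, (∀ t, M t ∈ S) ∧
        star x ⬝ᵥ kronPow k M *ᵥ y ≠ 0 := by
  simp only [KUnextendible, frobInner_vecMulVec, ne_eq, star_eq_zero]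
  refine ⟨fun h x y hx hy => ?_, fun h x y hx hy => ?_⟩
  · simpa using h x (star y) hx (by simpa using hy)
  · exact h x (star y) hx (by simpa using hy)

lemma KUnextendible.of_subset_span {r : ℕ} {P : Fin r → Matrix (Fin a) (Fin b) ℂ}
    (h : KUnextendible S k) (hS : S ⊆ Submodule.span ℂ (Set.range P)) :
    KUnextendible (Set.range P) k := by
  rw [kUnextendible_iff] at h ⊢
  intro x y hx hy
  obtain ⟨M, hMS, hM⟩ := h x y hx hy
  choose c hc using fun t => (Submodule.mem_span_range_iff_exists_fun ℂ).mp (hS (hMS t))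
  contrapose! hM
  rw [show M = fun t => ∑ α, c t α • P α from funext fun t => (hc t).symm, kronPow_sum_smul,
    sum_mulVec, dotProduct_sum]
  exact Finset.sum_eq_zero fun F _ => by
    rw [smul_mulVec, dotProduct_smul, hM _ fun t => ⟨F t, rfl⟩, smul_zero]

lemma KUnextendible.image_mul_mul (h : KUnextendible S k) {L : Matrix (Fin a) (Fin a) ℂ}
    {R : Matrix (Fin b) (Fin b) ℂ} (hL : IsUnit L) (hR : IsUnit R) :
    KUnextendible ((fun M => L * M * R) '' S) k := by
  rw [kUnextendible_iff] at h ⊢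
  intro x y hx hy
  have hLk : IsUnit (kronPow k fun _ => L)ᴴ := by
    rw [kronPow_conjTranspose]
    exact isUnit_kronPow_const ((isUnit_conjTranspose L).mpr hL)
  obtain ⟨M, hMS, hM⟩ := h _ _ (mulVec_ne_zero_of_isUnit hLk hx)
    (mulVec_ne_zero_of_isUnit (isUnit_kronPow_const hR) hy)
  refine ⟨fun t => L * M t * R, fun t => ⟨M t, hMS t, rfl⟩, ?_⟩
  rwa [← kronPow_mul, ← kronPow_mul, ← mulVec_mulVec, ← mulVec_mulVec,
    ← conjTranspose_mulVec_dotProduct]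

lemma KUnextendible.image_transpose (h : KUnextendible S k) :
    KUnextendible (Matrix.transpose '' S) k := by
  rw [kUnextendible_iff] at h ⊢
  intro x y hx hy
  obtain ⟨M, hMS, hM⟩ := h (star y) (star x) (by simpa using hy) (by simpa using hx)
  refine ⟨fun t => (M t)ᵀ, fun t => ⟨M t, hMS t, rfl⟩, ?_⟩
  rwa [← kronPow_transpose, dotProduct_transpose_mulVec, ← star_star y]

lemma KUnextendible.exists_dotProduct_mulVec_ne_zero (h : KUnextendible S 1) {y : Fin a → ℂ}
    {x : Fin b → ℂ} (hy : y ≠ 0) (hx : x ≠ 0) : ∃ M ∈ S, star y ⬝ᵥ M *ᵥ x ≠ 0 := by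
  have lift_ne {n : ℕ} {v : Fin n → ℂ} (hv : v ≠ 0) : v ∘ Equiv.funUnique (Fin 1) (Fin n) ≠ 0 :=
    fun h0 => hv (funext fun i => by simpa using congrFun h0 (fun _ => i))
  obtain ⟨M, hMS, hM⟩ := kUnextendible_iff.mp h _ _ (lift_ne hy) (lift_ne hx)
  refine ⟨M 0, hMS 0, ?_⟩
  rwa [kronPow_fin_one, submatrix_mulVec_equiv, Function.comp_assoc, Equiv.self_comp_symm,
    Function.comp_id, show star (y ∘ Equiv.funUnique (Fin 1) (Fin a)) = star y ∘ _ from rfl,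
    comp_equiv_dotProduct_comp_equiv] at hM

end Unextendible

lemma posDef_sum_of_kUnextendible_one {d r : ℕ} {P : Fin r → Matrix (Fin d) (Fin d) ℂ}
    (hP : ∀ i, (P i).PosSemidef) (h : KUnextendible (Set.range P) 1) : (∑ i, P i).PosDef := by
  refine .of_dotProduct_mulVec_pos (posSemidef_sum _ fun i _ => hP i).isHermitian fun x hx => ?_
  obtain ⟨_, ⟨i, rfl⟩, hi⟩ := h.exists_dotProduct_mulVec_ne_zero hx hx
  rw [sum_mulVec, dotProduct_sum]
  exact Finset.sum_pos' (fun j _ => (hP j).dotProduct_mulVec_nonneg x)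
    ⟨i, Finset.mem_univ i, ((hP i).dotProduct_mulVec_nonneg x).lt_of_ne hi.symm⟩

lemma Matrix.PosDef.exists_isUnit_conjTranspose_mul_mul_eq_one {n : Type*} [Fintype n]
    [DecidableEq n] {Q : Matrix n n ℂ} (hQ : Q.PosDef) : ∃ W, IsUnit W ∧ Wᴴ * Q * W = 1 := by
  open scoped MatrixOrder in
  obtain ⟨B, rfl⟩ := CStarAlgebra.nonneg_iff_eq_star_mul_self.mp hQ.posSemidef.nonneg
  have hB : IsUnit B := isUnit_of_mul_isUnit_right hQ.isUnit
  refine ⟨B⁻¹, isUnit_nonsing_inv_iff.mpr hB, ?_⟩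
  rw [star_eq_conjTranspose, ← Matrix.mul_assoc, ← conjTranspose_mul, Matrix.mul_assoc,
    mul_nonsing_inv B ((isUnit_iff_isUnit_det B).mp hB), conjTranspose_one, Matrix.one_mul]

lemma mul_outer_mul_conjTranspose {m n : Type*} [Fintype m] (M : Matrix n m ℂ) (ψ : m → ℂ) :
    M * outer ψ * Mᴴ = outer (M *ᵥ ψ) := by
  rw [outer, mul_vecMulVec, vecMulVec_mul, outer, star_mulVec]

lemma trace_outer_mul_outer {n : Type*} [Fintype n] (u v : n → ℂ) :
    trace (outer u * outer v) = (Complex.normSq (star u ⬝ᵥ v) : ℂ) := by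
  rw [outer, outer, vecMulVec_mul_vecMulVec, trace_vecMulVec, dotProduct_smul, smul_eq_mul,
    ← Complex.mul_conj, dotProduct_star, dotProduct_comm v]
  rfl

lemma trace_applyKraus_outer_mul_eq_zero_iff {ι m n : Type*} [Fintype ι] [Fintype m]
    [Fintype n] (A : ι → Matrix n m ℂ) (ψ φ : m → ℂ) :
    trace (applyKraus A (outer ψ) * applyKraus A (outer φ)) = 0 ↔
      ∀ k l, star ψ ⬝ᵥ ((A k)ᴴ * A l) *ᵥ φ = 0 := by
  simp only [applyKraus, mul_outer_mul_conjTranspose, Finset.sum_mul_sum, trace_sum,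
    trace_outer_mul_outer, star_mulVec, ← dotProduct_mulVec, mulVec_mulVec]
  simp_rw [← Complex.ofReal_sum, Complex.ofReal_eq_zero]
  rw [Finset.sum_eq_zero_iff_of_nonneg fun _ _ =>
    Finset.sum_nonneg fun _ _ => Complex.normSq_nonneg _]
  simp only [Finset.sum_eq_zero_iff_of_nonneg fun _ _ => Complex.normSq_nonneg _,
    Finset.mem_univ, true_implies, Complex.normSq_eq_zero]

lemma noZeroError_of_stronglyUnextendible {κ a b : ℕ} (A : Fin κ → Matrix (Fin a) (Fin b) ℂ)
    (h : StronglyUnextendible (Set.range fun k => (A k)ᴴ * A k)) : NoZeroError A := by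
  intro N hN ψ φ hψ hφ htr
  obtain ⟨M, hMS, hM⟩ := kUnextendible_iff.mp (h N hN) ψ φ hψ hφ
  choose F hF using hMS
  have hgram : kronPow N M = (powKraus A N F)ᴴ * powKraus A N F := by
    rw [show powKraus A N F = kronPow N (fun t => A (F t)) from rfl, kronPow_conjTranspose,
      kronPow_mul]
    simp only [hF]
  exact hM (hgram ▸ (trace_applyKraus_outer_mul_eq_zero_iff _ ψ φ).mp htr F F)

/-- Placing the `k`-th operator in the `k`-th block of rows makes the cross terms
`(blockKraus E k)ᴴ * blockKraus E l`, `k ≠ l`, vanish. -/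
def blockKraus {r n m : ℕ} (E : Fin r → Matrix (Fin n) (Fin m) ℂ) (k : Fin r) :
    Matrix (Fin (r * n)) (Fin m) ℂ :=
  (of fun (p : Fin r × Fin n) j => if p.1 = k then E k p.2 j else 0).submatrix
    finProdFinEquiv.symm id

lemma blockKraus_conjTranspose_mul {r n m : ℕ} (E : Fin r → Matrix (Fin n) (Fin m) ℂ)
    (k l : Fin r) :
    (blockKraus E k)ᴴ * blockKraus E l = if k = l then (E k)ᴴ * E k else 0 := by
  rw [blockKraus, blockKraus, conjTranspose_submatrix, submatrix_mul_equiv, submatrix_id_id]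
  ext i j
  split_ifs with hkl
  · subst hkl
    simp [mul_apply, Fintype.sum_prod_type]
  · simp [mul_apply, Fintype.sum_prod_type, Ne.symm hkl]

lemma exists_isKraus_gram {r d : ℕ} (G : Fin r → Matrix (Fin d) (Fin d) ℂ)
    (hG : ∀ k, (G k).PosSemidef) (hsum : ∑ k, G k = 1) :
    ∃ A : Fin r → Matrix (Fin (r * d)) (Fin d) ℂ,
      IsKraus A ∧ ∀ k l, (A k)ᴴ * A l = if k = l then G k else 0 := by
  open scoped MatrixOrder in
  choose C hC using fun k => CStarAlgebra.nonneg_iff_eq_star_mul_self.mp (hG k).nonneg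
  have hgram (k l : Fin r) : (blockKraus C k)ᴴ * blockKraus C l = if k = l then G k else 0 := by
    rw [blockKraus_conjTranspose_mul, hC, star_eq_conjTranspose]
  exact ⟨blockKraus C, by simp only [IsKraus, hgram, if_pos, hsum], hgram⟩

lemma exists_isKraus_noZeroError {r d : ℕ} {G : Fin r → Matrix (Fin d) (Fin d) ℂ}
    (hG : ∀ k, (G k).PosSemidef) (hsum : ∑ k, G k = 1)
    (h : StronglyUnextendible (Set.range G)) :
    ∃ A : Fin r → Matrix (Fin (r * d)) (Fin d) ℂ,
      IsKraus A ∧ NoZeroError A ∧ ∀ k l, (A k)ᴴ * A l = if k = l then G k else 0 := by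
  obtain ⟨A, hK, hA⟩ := exists_isKraus_gram G hG hsum
  exact ⟨A, hK, noZeroError_of_stronglyUnextendible A (by simpa only [hA, if_pos] using h), hA⟩

section CongruenceChannels

variable {r d : ℕ} {P : Fin r → Matrix (Fin d) (Fin d) ℂ}

lemma exists_kraus_gram_congr (hP : ∀ k, (P k).PosSemidef)
    (h : StronglyUnextendible (Set.range P)) :
    ∃ W, IsUnit W ∧ ∃ A : Fin r → Matrix (Fin (r * d)) (Fin d) ℂ,
      IsKraus A ∧ NoZeroError A ∧ ∀ k l, (A k)ᴴ * A l = if k = l then Wᴴ * P k * W else 0 := by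
  obtain ⟨W, hW, hWP⟩ :=
    (posDef_sum_of_kUnextendible_one hP (h 1 le_rfl)).exists_isUnit_conjTranspose_mul_mul_eq_one
  refine ⟨W, hW, exists_isKraus_noZeroError (fun k => (hP k).conjTranspose_mul_mul_same W)
    (by rw [← Finset.sum_mul, ← Finset.mul_sum, hWP]) fun k hk => ?_⟩
  rw [show (fun k => Wᴴ * P k * W) = (fun M => Wᴴ * M * W) ∘ P from rfl, Set.range_comp]
  exact (h k hk).image_mul_mul ((isUnit_conjTranspose W).mpr hW) hW

lemma exists_kraus_gram_congr_transpose (hP : ∀ k, (P k).PosSemidef)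
    (h : StronglyUnextendible (Set.range P)) :
    ∃ W, IsUnit W ∧ ∃ A : Fin r → Matrix (Fin (r * d)) (Fin d) ℂ,
      IsKraus A ∧ NoZeroError A ∧
        ∀ k l, (A k)ᴴ * A l = if k = l then (Wᴴ * P k * W)ᵀ else 0 := by
  obtain ⟨W, hW, hWP⟩ :=
    (posDef_sum_of_kUnextendible_one hP (h 1 le_rfl)).exists_isUnit_conjTranspose_mul_mul_eq_one
  refine ⟨W, hW, exists_isKraus_noZeroError
    (fun k => ((hP k).conjTranspose_mul_mul_same W).transpose)
    (by rw [← transpose_sum, ← Finset.sum_mul, ← Finset.mul_sum, hWP, transpose_one])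
    fun k hk => ?_⟩
  rw [show (fun k => (Wᴴ * P k * W)ᵀ) = transpose ∘ (fun M => Wᴴ * M * W) ∘ P from rfl,
    Set.range_comp, Set.range_comp]
  exact ((h k hk).image_mul_mul ((isUnit_conjTranspose W).mpr hW) hW).image_transpose

end CongruenceChannels

lemma star_vec_dotProduct_kronecker_mulVec {m n : Type*} [Fintype m] [Fintype n]
    (M : Matrix m m ℂ) (N : Matrix n n ℂ) (Ψ Φ : Matrix n m ℂ) :
    star (vec Ψ) ⬝ᵥ (M ⊗ₖ N) *ᵥ vec Φ = trace (Ψᴴ * N * Φ * Mᵀ) := by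
  rw [kronecker_mulVec_vec, star_vec_dotProduct_vec, Matrix.mul_assoc, Matrix.mul_assoc,
    Matrix.mul_assoc]

lemma trace_applyKraus_jointKraus_eq_zero {κ₁ κ₂ n₁ n₂ d₁ d₂ : ℕ}
    {A₁ : Fin κ₁ → Matrix (Fin n₁) (Fin d₁) ℂ} {A₂ : Fin κ₂ → Matrix (Fin n₂) (Fin d₂) ℂ}
    {G₁ : Fin κ₁ → Matrix (Fin d₁) (Fin d₁) ℂ} {G₂ : Fin κ₂ → Matrix (Fin d₂) (Fin d₂) ℂ}
    (hA₁ : ∀ k l, (A₁ k)ᴴ * A₁ l = if k = l then (G₁ k)ᵀ else 0)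
    (hA₂ : ∀ k l, (A₂ k)ᴴ * A₂ l = if k = l then G₂ k else 0)
    {Ψ Φ : Matrix (Fin d₂) (Fin d₁) ℂ} (h : ∀ k l, trace (Ψᴴ * G₂ l * Φ * G₁ k) = 0) :
    trace (applyKraus (jointKraus A₁ A₂) (outer (vec Ψ)) *
      applyKraus (jointKraus A₁ A₂) (outer (vec Φ))) = 0 := by
  rw [trace_applyKraus_outer_mul_eq_zero_iff]
  rintro ⟨k₁, k₂⟩ ⟨l₁, l₂⟩
  rw [jointKraus, jointKraus, conjTranspose_kronecker, ← mul_kronecker_mul, hA₁, hA₂]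
  split_ifs with h₁ h₂
  · rw [star_vec_dotProduct_kronecker_mulVec, transpose_transpose, h]
  all_goals simp only [kronecker_zero, zero_kronecker, zero_mulVec, dotProduct_zero]

lemma trace_inv_congr_cancel {n : Type*} [Fintype n] [DecidableEq n] {W V : Matrix n n ℂ}
    (hW : IsUnit W) (hV : IsUnit V) (R P Y₁ Y₂ : Matrix n n ℂ) :
    trace ((V⁻¹ * Y₁ * W⁻¹ᴴ)ᴴ * (Vᴴ * R * V) * (V⁻¹ * Y₂ * W⁻¹ᴴ) * (Wᴴ * P * W)) =
      trace (Y₁ᴴ * R * Y₂ * P) := by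
  have hW' := (isUnit_iff_isUnit_det W).mp hW
  have hV' := (isUnit_iff_isUnit_det V).mp hV
  have hWH : IsUnit Wᴴ.det := by rw [det_conjTranspose]; exact hW'.star
  have hVH : IsUnit Vᴴ.det := by rw [det_conjTranspose]; exact hV'.star
  simp only [conjTranspose_mul, conjTranspose_conjTranspose, conjTranspose_nonsing_inv,
    Matrix.mul_assoc, nonsing_inv_mul_cancel_left _ _ hVH, mul_nonsing_inv_cancel_left _ _ hV',
    nonsing_inv_mul_cancel_left _ _ hWH]
  rw [trace_mul_comm]
  simp only [Matrix.mul_assoc, mul_nonsing_inv _ hW', Matrix.mul_one]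

lemma Xmat_eq_toMatrix (n : ℕ) :
    Xmat n = (Fin.revPerm : Equiv.Perm (Fin n)).toPEquiv.toMatrix := by
  ext i j
  simp only [Xmat, of_apply, PEquiv.toMatrix_apply, Equiv.toPEquiv_apply, Option.mem_def,
    Option.some.injEq, Fin.ext_iff, Fin.revPerm_apply, Fin.val_rev]
  exact if_congr (by omega) rfl rfl

lemma Xmat_mul_self (n : ℕ) : Xmat n * Xmat n = 1 := by
  rw [Xmat_eq_toMatrix, ← PEquiv.toMatrix_trans, ← Equiv.toPEquiv_trans,
    show Fin.revPerm.trans Fin.revPerm = Equiv.refl (Fin n) from Equiv.ext Fin.rev_rev,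
    Equiv.toPEquiv_refl, PEquiv.toMatrix_refl]

lemma trace_mul_Xmat_mul_Xmat_mul_eq_zero {d : ℕ} {S : Set (Matrix (Fin d) (Fin d) ℂ)}
    {P K : Matrix (Fin d) (Fin d) ℂ} (hP : P ∈ S) (hPh : P.IsHermitian)
    (hK : K ∈ frobOrthSet S) : trace (K * Xmat d * Xmat d * P) = 0 := by
  rw [Matrix.mul_assoc K, Xmat_mul_self, Matrix.mul_one, trace_mul_comm, ← hPh.eq]
  exact hK P hP

lemma exists_fin_range_subset_span_eq {K V : Type*} [DivisionRing K] [AddCommGroup V]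
    [Module K V] [FiniteDimensional K V] (T : Set V) :
    ∃ (r : ℕ) (P : Fin r → V),
      Set.range P ⊆ T ∧ Submodule.span K (Set.range P) = Submodule.span K T := by
  obtain ⟨b, hbT, hspan, hli⟩ := exists_linearIndependent K T
  obtain ⟨r, P, -, rfl⟩ := hli.set_finite_of_isNoetherian.fin_param
  exact ⟨r, P, hbT, hspan⟩

theorem sufficient_conditions_for_classical_zero_error_superactivation_general
    (dA : ℕ) (hdA : 0 < dA) (S : Submodule ℂ (Matrix (Fin dA) (Fin dA) ℂ))
    (ha : StronglyUnextendible (S : Set (Matrix (Fin dA) (Fin dA) ℂ)))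
    (hb : StronglyUnextendible (frobOrthSet (S : Set (Matrix (Fin dA) (Fin dA) ℂ))))
    (he : ∃ T : Set (Matrix (Fin dA) (Fin dA) ℂ),
      (∀ M ∈ T, M.PosSemidef) ∧ Submodule.span ℂ T = S)
    (hf : ∃ T : Set (Matrix (Fin dA) (Fin dA) ℂ),
      (∀ M ∈ T, M.PosSemidef) ∧
      (Submodule.span ℂ T : Set (Matrix (Fin dA) (Fin dA) ℂ)) =
        (fun N => N * Xmat dA) '' frobOrthSet (S : Set (Matrix (Fin dA) (Fin dA) ℂ))) :
    ∃ (n₁ n₂ κ₁ κ₂ : ℕ) (A1 : Fin κ₁ → Matrix (Fin n₁) (Fin dA) ℂ)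
      (A2 : Fin κ₂ → Matrix (Fin n₂) (Fin dA) ℂ),
      IsKraus A1 ∧ IsKraus A2 ∧ NoZeroError A1 ∧ NoZeroError A2 ∧
      ∃ ψ φ : (Fin dA × Fin dA) → ℂ, ψ ≠ 0 ∧ φ ≠ 0 ∧
        Matrix.trace (applyKraus (jointKraus A1 A2) (outer ψ) *
          applyKraus (jointKraus A1 A2) (outer φ)) = 0 := by
  obtain ⟨T₁, hT₁, hspan₁⟩ := he
  obtain ⟨T₂, hT₂, hspan₂⟩ := hf
  obtain ⟨r, P, hPT, hP⟩ := exists_fin_range_subset_span_eq (K := ℂ) T₁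
  obtain ⟨s, R, hRT, hR⟩ := exists_fin_range_subset_span_eq (K := ℂ) T₂
  have hX : IsUnit (Xmat dA) := .of_mul_eq_one _ (Xmat_mul_self dA)
  have hSUP : StronglyUnextendible (Set.range P) := fun k hk =>
    (ha k hk).of_subset_span (by rw [hP, hspan₁])
  have hSUR : StronglyUnextendible (Set.range R) := fun k hk =>
    ((hb k hk).image_mul_mul isUnit_one hX).of_subset_span
      (by simp only [Matrix.one_mul, ← hspan₂, hR, subset_refl])
  obtain ⟨W, hW, A₁, hK₁, hN₁, hA₁⟩ :=
    exists_kraus_gram_congr_transpose (fun k => hT₁ _ (hPT ⟨k, rfl⟩)) hSUP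
  obtain ⟨V, hV, A₂, hK₂, hN₂, hA₂⟩ := exists_kraus_gram_congr (fun l => hT₂ _ (hRT ⟨l, rfl⟩)) hSUR
  have : Nonempty (Fin dA) := Fin.pos_iff_nonempty.mp hdA
  have hvec {Y} (hY : IsUnit Y) : vec (V⁻¹ * Y * W⁻¹ᴴ) ≠ 0 := vec_eq_zero_iff.not.mpr
    (((isUnit_nonsing_inv_iff.mpr hV).mul hY).mul
      ((isUnit_conjTranspose _).mpr (isUnit_nonsing_inv_iff.mpr hW))).ne_zero
  refine ⟨_, _, _, _, A₁, A₂, hK₁, hK₂, hN₁, hN₂, _, _, hvec isUnit_one, hvec hX,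
    trace_applyKraus_jointKraus_eq_zero hA₁ hA₂ fun k l => ?_⟩
  obtain ⟨K, hK, hKR⟩ : R l ∈ (fun N => N * Xmat dA) '' frobOrthSet (S : Set _) :=
    hspan₂ ▸ Submodule.subset_span (hRT ⟨l, rfl⟩)
  rw [trace_inv_congr_cancel hW hV, conjTranspose_one, Matrix.one_mul, ← hKR]
  exact trace_mul_Xmat_mul_Xmat_mul_eq_zero (hspan₁ ▸ Submodule.subset_span (hPT ⟨k, rfl⟩))
    (hT₁ _ (hPT ⟨k, rfl⟩)).isHermitian hK

/-- **Sufficient conditions for superactivation of the classical zero-error capacity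
(Theorem 1 of the paper).**  If a subspace `S` of `dA×dA` matrices and its Frobenius
orthocomplement are both strongly unextendible, `S` and `SX` are closed under
conjugate transpose, and `S` and `S^⊥X` are spanned by positive semidefinite
matrices, then there exist channels `E1, E2` with input dimension `dA`, each with no
zero-error classical capacity, while the joint channel `E1 ⊗ E2` has two nonzero
input vectors producing orthogonal outputs (positive one-shot classical zero-error
capacity). -/
theorem sufficient_conditions_for_classical_zero_error_superactivation
    (dA : ℕ) (hdA : 0 < dA) (S : Submodule ℂ (Matrix (Fin dA) (Fin dA) ℂ))
    (ha : StronglyUnextendible (S : Set (Matrix (Fin dA) (Fin dA) ℂ)))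
    (hb : StronglyUnextendible (frobOrthSet (S : Set (Matrix (Fin dA) (Fin dA) ℂ))))
    (hc : ∀ M ∈ S, Mᴴ ∈ S)
    (hd : ∀ A ∈ (fun M => M * Xmat dA) '' (S : Set (Matrix (Fin dA) (Fin dA) ℂ)),
      Aᴴ ∈ (fun M => M * Xmat dA) '' (S : Set (Matrix (Fin dA) (Fin dA) ℂ)))
    (he : ∃ T : Set (Matrix (Fin dA) (Fin dA) ℂ),
      (∀ M ∈ T, M.PosSemidef) ∧ Submodule.span ℂ T = S)
    (hf : ∃ T : Set (Matrix (Fin dA) (Fin dA) ℂ),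
      (∀ M ∈ T, M.PosSemidef) ∧
      (Submodule.span ℂ T : Set (Matrix (Fin dA) (Fin dA) ℂ)) =
        (fun N => N * Xmat dA) '' frobOrthSet (S : Set (Matrix (Fin dA) (Fin dA) ℂ))) :
    ∃ (n₁ n₂ κ₁ κ₂ : ℕ) (A1 : Fin κ₁ → Matrix (Fin n₁) (Fin dA) ℂ)
      (A2 : Fin κ₂ → Matrix (Fin n₂) (Fin dA) ℂ),
      IsKraus A1 ∧ IsKraus A2 ∧ NoZeroError A1 ∧ NoZeroError A2 ∧
      ∃ ψ φ : (Fin dA × Fin dA) → ℂ, ψ ≠ 0 ∧ φ ≠ 0 ∧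
        Matrix.trace (applyKraus (jointKraus A1 A2) (outer ψ) *
          applyKraus (jointKraus A1 A2) (outer φ)) = 0 :=
  sufficient_conditions_for_classical_zero_error_superactivation_general dA hdA S ha hb he hf
end
end

section
/- Let M be a quantum channel from ℂ² to ℂ² (i.e. M(ρ) = Σ_k B_k ρ B_kᴴ with 2×2 matrices B_k satisfying Σ_k B_kᴴ B_k = I₂). Let e₀, e₁ be the standard basis of ℂ² and e_± = (e₀ ± e₁)/√2. If M fixes the four projectors e₀e₀ᴴ, e₁e₁ᴴ, e₊e₊ᴴ, e₋e₋ᴴ, then M is the identity map: M(ρ) = ρ for every 2×2 complex matrix ρ. -/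
/-! Fixing `e₀e₀ᴴ` and `e₁e₁ᴴ` forces every Kraus operator to be diagonal, `B k = diag (a k, b k)`,
with `∑ |a k|² = ∑ |b k|² = 1`. Fixing `e₊e₊ᴴ` then gives `∑ a k * conj (b k) = 1`, the equality
case of Cauchy–Schwarz, so `a = b`: every `B k` is the scalar `a k`, and a channel whose Kraus
operators are scalars of total weight `∑ |a k|² = 1` is the identity. -/

open Matrix

noncomputable section

/-- The standard basis vector `e₀` of `ℂ²`. -/
def e0 : Fin 2 → ℂ := fun i => if i = 0 then 1 else 0

/-- The standard basis vector `e₁` of `ℂ²`. -/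
def e1 : Fin 2 → ℂ := fun i => if i = 1 then 1 else 0

/-- `e₊ = (e₀ + e₁)/√2`. -/
def ePlus : Fin 2 → ℂ := ((Real.sqrt 2 : ℝ) : ℂ)⁻¹ • (e0 + e1)

/-- `e₋ = (e₀ − e₁)/√2`. -/
def eMinus : Fin 2 → ℂ := ((Real.sqrt 2 : ℝ) : ℂ)⁻¹ • (e0 - e1)

open scoped ComplexOrder

section Kraus

lemma outer_apply {n : Type*} (ψ : n → ℂ) (i j : n) : outer ψ i j = ψ i * star (ψ j) := rfl

variable {ι m n : Type*} [Fintype ι] [Fintype m]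

lemma applyKraus_outer (A : ι → Matrix n m ℂ) (ψ : m → ℂ) :
    applyKraus A (outer ψ) = ∑ k, outer (A k *ᵥ ψ) := by
  simp only [applyKraus, outer, mul_vecMulVec, vecMulVec_mul, vecMul_conjTranspose, star_star]

lemma applyKraus_outer_apply (A : ι → Matrix n m ℂ) (ψ : m → ℂ) (i j : n) :
    applyKraus A (outer ψ) i j = (fun k => (A k *ᵥ ψ) i) ⬝ᵥ star (fun k => (A k *ᵥ ψ) j) := by
  rw [applyKraus_outer, Matrix.sum_apply, dotProduct]
  rfl

variable [Fintype n] [DecidableEq n]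

lemma isDiag_of_applyKraus_outer_single {A : ι → Matrix n n ℂ}
    (h : ∀ j, applyKraus A (outer (Pi.single j 1)) = outer (Pi.single j 1)) (k : ι) :
    (A k).IsDiag := by
  intro i j hij
  have hii := congrFun (congrFun (h j) i) i
  rw [applyKraus_outer_apply, outer_apply] at hii
  simp only [mulVec_single_one, col_apply, Pi.single_apply, hij, if_false, zero_mul] at hii
  exact congrFun (dotProduct_self_star_eq_zero.1 hii) k

lemma dotProduct_star_diag_eq_one {A : ι → Matrix n n ℂ} (hA : ∀ k, (A k).IsDiag) {ψ : n → ℂ}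
    (h : applyKraus A (outer ψ) = outer ψ) {i j : n} (hi : ψ i ≠ 0) (hj : ψ j ≠ 0) :
    (fun k => A k i i) ⬝ᵥ star (fun k => A k j j) = 1 := by
  have hmulVec : ∀ k l, (A k *ᵥ ψ) l = A k l l * ψ l := fun k l => by
    simpa only [(hA k).diagonal_diag, diag_apply] using mulVec_diagonal (A k).diag ψ l
  have hij := congrFun (congrFun h i) j
  rw [applyKraus_outer_apply, outer_apply] at hij
  refine (mul_eq_left₀ (mul_ne_zero hi (star_ne_zero.2 hj))).1 ?_
  refine Eq.trans ?_ hij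
  simp only [dotProduct, Finset.mul_sum, hmulVec, Pi.star_apply, star_mul']
  exact Finset.sum_congr rfl fun k _ => by ring

lemma applyKraus_smul_one (c : ι → ℂ) (ρ : Matrix n n ℂ) :
    applyKraus (fun k => c k • (1 : Matrix n n ℂ)) ρ = (c ⬝ᵥ star c) • ρ := by
  simp [applyKraus, dotProduct, Finset.sum_smul, smul_smul, mul_comm]

end Kraus

lemma Matrix.IsDiag.eq_smul_one {n R : Type*} [DecidableEq n] [Semiring R] {A : Matrix n n R}
    (hA : A.IsDiag) {c : R} (hc : ∀ i, A i i = c) : A = c • 1 := by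
  rw [← hA.diagonal_diag, smul_one_eq_diagonal]
  exact congrArg diagonal (funext hc)

lemma eq_of_dotProduct_star_eq_one {ι R : Type*} [Fintype ι] [CommRing R] [PartialOrder R]
    [StarRing R] [StarOrderedRing R] [NoZeroDivisors R] {a b : ι → R}
    (ha : a ⬝ᵥ star a = 1) (hb : b ⬝ᵥ star b = 1) (hab : a ⬝ᵥ star b = 1) : a = b := by
  have hba : b ⬝ᵥ star a = 1 := by
    rw [dotProduct_comm, star_dotProduct, dotProduct_comm, hab, star_one]
  rw [← sub_eq_zero, ← dotProduct_self_star_eq_zero]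
  simp only [star_sub, sub_dotProduct, dotProduct_sub, ha, hb, hab, hba, sub_self]

lemma e0_eq_single : e0 = Pi.single 0 1 := by
  ext i
  simp [e0, Pi.single_apply]

lemma e1_eq_single : e1 = Pi.single 1 1 := by
  ext i
  simp [e1, Pi.single_apply]

lemma ePlus_apply_ne_zero (i : Fin 2) : ePlus i ≠ 0 := by
  fin_cases i <;> simp [ePlus, e0, e1]

theorem qubit_channel_fixing_four_projectors_is_id_general
    {κ : ℕ} (B : Fin κ → Matrix (Fin 2) (Fin 2) ℂ)
    (h0 : applyKraus B (outer e0) = outer e0)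
    (h1 : applyKraus B (outer e1) = outer e1)
    (hp : applyKraus B (outer ePlus) = outer ePlus) :
    ∀ ρ : Matrix (Fin 2) (Fin 2) ℂ, applyKraus B ρ = ρ := by
  intro ρ
  have hdiag : ∀ k, (B k).IsDiag := isDiag_of_applyKraus_outer_single <|
    Fin.forall_fin_two.2 ⟨e0_eq_single ▸ h0, e1_eq_single ▸ h1⟩
  set d : Fin 2 → Fin κ → ℂ := fun i k => B k i i
  have hd0 : d 0 ⬝ᵥ star (d 0) = 1 :=
    dotProduct_star_diag_eq_one hdiag h0 (by simp [e0]) (by simp [e0])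
  have hd1 : d 1 ⬝ᵥ star (d 1) = 1 :=
    dotProduct_star_diag_eq_one hdiag h1 (by simp [e1]) (by simp [e1])
  have hd01 : d 0 ⬝ᵥ star (d 1) = 1 :=
    dotProduct_star_diag_eq_one hdiag hp (ePlus_apply_ne_zero 0) (ePlus_apply_ne_zero 1)
  have hd : d 1 = d 0 := (eq_of_dotProduct_star_eq_one hd0 hd1 hd01).symm
  have hB : B = fun k => d 0 k • 1 := funext fun k =>
    (hdiag k).eq_smul_one (Fin.forall_fin_two.2 ⟨rfl, congrFun hd k⟩)
  rw [hB, applyKraus_smul_one, hd0, one_smul]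

/-- A qubit channel fixing the four projectors `e₀e₀ᴴ`, `e₁e₁ᴴ`, `e₊e₊ᴴ`, `e₋e₋ᴴ`
is the identity map. -/
theorem qubit_channel_fixing_four_projectors_is_id
    {κ : ℕ} (B : Fin κ → Matrix (Fin 2) (Fin 2) ℂ) (hB : IsKraus B)
    (h0 : applyKraus B (outer e0) = outer e0)
    (h1 : applyKraus B (outer e1) = outer e1)
    (hp : applyKraus B (outer ePlus) = outer ePlus)
    (hm : applyKraus B (outer eMinus) = outer eMinus) :
    ∀ ρ : Matrix (Fin 2) (Fin 2) ℂ, applyKraus B ρ = ρ :=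
  qubit_channel_fixing_four_projectors_is_id_general B h0 h1 hp
end
end

section
/- Let E(ρ) = Σ_k A_k ρ A_kᴴ be a quantum channel from ℂ^m to ℂ^n, let E* be its adjoint, and let σ be the Choi matrix of the composite map N = E* ∘ E (so σ is an m²×m² positive semidefinite matrix). Then for all ψ, φ ∈ ℂ^m, tr[E(ψψᴴ) · E(φφᴴ)] = tr[σ · ((φφᴴ)ᵀ ⊗ ψψᴴ)]. Consequently, tr[E(ψψᴴ) · E(φφᴴ)] ≠ 0 for all nonzero ψ, φ ∈ ℂ^m if and only if the kernel of σ contains no nonzero product vector u ⊗ v with u, v ∈ ℂ^m. -/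
open Matrix

noncomputable section

/-- The Choi matrix `σ = ∑_{i,j} E_{ij} ⊗ N(E_{ij})` of a linear map `N` on
`m×m` matrices, where `E_{ij}` are the matrix units. -/
def choiMat {m : ℕ} (N : Matrix (Fin m) (Fin m) ℂ → Matrix (Fin m) (Fin m) ℂ) :
    Matrix (Fin m × Fin m) (Fin m × Fin m) ℂ :=
  ∑ i : Fin m, ∑ j : Fin m,
    Matrix.kroneckerMap (· * ·) (Matrix.single i j (1 : ℂ))
      (N (Matrix.single i j (1 : ℂ)))

/-- The Choi matrix of the composite map `E* ∘ E`, where `E` is the channel with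
Kraus operators `A` and `E*(Y) = ∑ₖ Aₖᴴ Y Aₖ` is its adjoint. -/
def choiAdjComp {m n κ : ℕ} (A : Fin κ → Matrix (Fin n) (Fin m) ℂ) :
    Matrix (Fin m × Fin m) (Fin m × Fin m) ℂ :=
  choiMat (fun ρ => applyKraus (fun k => (A k)ᴴ) (applyKraus A ρ))

/-! For a linear map `N`, the Choi matrix pairs with product operators through `N` itself:
`tr[choi(N) (Xᵀ ⊗ Y)] = tr[N(X) Y]`. With `N = E* ∘ E` and the trace duality
`tr[E(X) Y] = tr[X E*(Y)]` this gives the identity. Moreover `E* ∘ E` has Kraus operators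
`A_kᴴ A_l`, so `σ = ∑ |vec(A_kᴴ A_l)⟩⟨vec(A_kᴴ A_l)|` is positive semidefinite, and
`(φφᴴ)ᵀ ⊗ ψψᴴ` is the rank-one operator of `w = φ̄ ⊗ ψ`; hence the trace is `wᴴ σ w`, which
vanishes iff `σ w = 0`. Finally `φ ↦ φ̄` is a bijection of the nonzero vectors. -/

open ComplexOrder Kronecker

variable {ι m n : Type*}

lemma trace_mul_outer [Fintype m] (M : Matrix m m ℂ) (w : m → ℂ) :
    trace (M * outer w) = star w ⬝ᵥ M *ᵥ w := by
  rw [outer, mul_vecMulVec, trace_vecMulVec, dotProduct_comm]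

lemma kroneckerMap_transpose_outer (φ : m → ℂ) (ψ : n → ℂ) :
    kroneckerMap (· * ·) (outer φ)ᵀ (outer ψ) = outer (fun p => star (φ p.1) * ψ p.2) := by
  ext p q
  simp only [kroneckerMap_apply, outer, transpose_apply, vecMulVec_apply, Pi.star_apply,
    star_mul', star_star]
  ring

def krausMap [Fintype ι] [Fintype m] (A : ι → Matrix n m ℂ) :
    Matrix m m ℂ →ₗ[ℂ] Matrix n n ℂ where
  toFun := applyKraus A
  map_add' X Y := by
    simp only [applyKraus, Matrix.mul_add, Matrix.add_mul, Finset.sum_add_distrib]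
  map_smul' c X := by
    simp only [applyKraus, Matrix.mul_smul, Matrix.smul_mul, Finset.smul_sum, RingHom.id_apply]

lemma applyKraus_applyKraus {ι' l : Type*} [Fintype ι] [Fintype ι'] [Fintype m] [Fintype n]
    (B : ι' → Matrix l n ℂ) (A : ι → Matrix n m ℂ) (ρ : Matrix m m ℂ) :
    applyKraus B (applyKraus A ρ) = applyKraus (fun p : ι' × ι => B p.1 * A p.2) ρ := by
  simp only [applyKraus, Matrix.mul_sum, Matrix.sum_mul, conjTranspose_mul, Matrix.mul_assoc,
    Fintype.sum_prod_type]

lemma trace_applyKraus_mul [Fintype ι] [Fintype m] [Fintype n] (A : ι → Matrix n m ℂ)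
    (X : Matrix m m ℂ) (Y : Matrix n n ℂ) :
    trace (applyKraus A X * Y) = trace (X * applyKraus (fun k => (A k)ᴴ) Y) := by
  simp only [applyKraus, Matrix.sum_mul, Matrix.mul_sum, trace_sum, conjTranspose_conjTranspose]
  refine Finset.sum_congr rfl fun k _ => ?_
  rw [Matrix.mul_assoc, Matrix.mul_assoc, trace_mul_comm]
  simp only [Matrix.mul_assoc]

lemma choiMat_apply {d : ℕ} (N : Matrix (Fin d) (Fin d) ℂ → Matrix (Fin d) (Fin d) ℂ)
    (p q : Fin d × Fin d) :
    choiMat N p q = N (single p.1 q.1 1) p.2 q.2 := by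
  simp [choiMat, Matrix.sum_apply, single, kroneckerMap_apply, ite_mul, ite_and,
    Finset.sum_ite_eq']

lemma trace_choiMat_mul_kronecker {d : ℕ}
    (N : Matrix (Fin d) (Fin d) ℂ →ₗ[ℂ] Matrix (Fin d) (Fin d) ℂ) (X Y : Matrix (Fin d) (Fin d) ℂ) :
    trace (choiMat N * kroneckerMap (· * ·) Xᵀ Y) = trace (N X * Y) := by
  change trace (choiMat N * Xᵀ ⊗ₖ Y) = _
  conv_rhs => rw [matrix_eq_sum_single X]
  simp only [choiMat, Matrix.sum_mul, trace_sum, ← mul_kronecker_mul, trace_kronecker, map_sum,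
    trace_single_mul]
  refine Finset.sum_congr rfl fun i _ => Finset.sum_congr rfl fun j _ => ?_
  have hsingle : single i j (X i j) = X i j • single i j 1 := by
    rw [smul_single, smul_eq_mul, mul_one]
  rw [hsingle, map_smul, Matrix.smul_mul, trace_smul, transpose_apply, one_smul, smul_eq_mul]

lemma choiMat_applyKraus [Fintype ι] {d : ℕ} (B : ι → Matrix (Fin d) (Fin d) ℂ) :
    choiMat (applyKraus B) = ∑ k, outer (fun p => B k p.2 p.1) := by
  ext p q
  rw [choiMat_apply]
  simp [applyKraus, Matrix.sum_apply, outer, vecMulVec_apply, mul_apply, single, ite_and,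
    Finset.sum_ite_eq]

lemma posSemidef_choiMat_applyKraus [Fintype ι] {d : ℕ} (B : ι → Matrix (Fin d) (Fin d) ℂ) :
    (choiMat (applyKraus B)).PosSemidef := by
  rw [choiMat_applyKraus]
  exact posSemidef_sum _ fun k _ => posSemidef_vecMulVec_self_star _

lemma choiAdjComp_eq_choiMat_applyKraus {m n κ : ℕ} (A : Fin κ → Matrix (Fin n) (Fin m) ℂ) :
    choiAdjComp A = choiMat (applyKraus fun p : Fin κ × Fin κ => (A p.1)ᴴ * A p.2) := by
  simp only [choiAdjComp, applyKraus_applyKraus]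

lemma posSemidef_choiAdjComp {m n κ : ℕ} (A : Fin κ → Matrix (Fin n) (Fin m) ℂ) :
    (choiAdjComp A).PosSemidef := by
  rw [choiAdjComp_eq_choiMat_applyKraus]
  exact posSemidef_choiMat_applyKraus _

theorem trace_outputs_eq_choi_pairing_general
    {m n κ : ℕ} (A : Fin κ → Matrix (Fin n) (Fin m) ℂ) :
    (∀ ψ φ : Fin m → ℂ,
      Matrix.trace (applyKraus A (outer ψ) * applyKraus A (outer φ)) =
        Matrix.trace (choiAdjComp A *
          Matrix.kroneckerMap (· * ·) (outer φ)ᵀ (outer ψ))) ∧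
    ((∀ ψ φ : Fin m → ℂ, ψ ≠ 0 → φ ≠ 0 →
        Matrix.trace (applyKraus A (outer ψ) * applyKraus A (outer φ)) ≠ 0) ↔
      (∀ u v : Fin m → ℂ, u ≠ 0 → v ≠ 0 →
        choiAdjComp A *ᵥ (fun p => u p.1 * v p.2) ≠ 0)) := by
  have pairing (ψ φ : Fin m → ℂ) :
      trace (applyKraus A (outer ψ) * applyKraus A (outer φ)) =
        trace (choiAdjComp A * kroneckerMap (· * ·) (outer φ)ᵀ (outer ψ)) := by
    rw [trace_applyKraus_mul,
      show choiAdjComp A = choiMat (krausMap (fun k => (A k)ᴴ) ∘ₗ krausMap A) from rfl,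
      trace_choiMat_mul_kronecker, trace_mul_comm _ (outer ψ)]
    rfl
  have quadratic (ψ φ : Fin m → ℂ) :
      trace (applyKraus A (outer ψ) * applyKraus A (outer φ)) =
        star (fun p => star (φ p.1) * ψ p.2) ⬝ᵥ
          choiAdjComp A *ᵥ (fun p : Fin m × Fin m => star (φ p.1) * ψ p.2) := by
    rw [pairing, kroneckerMap_transpose_outer, trace_mul_outer]
  refine ⟨pairing, ?_⟩
  simp only [quadratic, (posSemidef_choiAdjComp A).dotProduct_mulVec_zero_iff, ne_eq]
  constructor
  · intro h u v hu hv
    simpa using h v (star u) hv (by simpa using hu)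
  · intro h ψ φ hψ hφ
    simpa using h (star φ) ψ (by simpa using hφ) hψ

/-- Let `σ` be the Choi matrix of `E* ∘ E`.  Then
`tr[E(ψψᴴ)·E(φφᴴ)] = tr[σ·((φφᴴ)ᵀ ⊗ ψψᴴ)]` for all `ψ, φ`, and consequently all
pairs of nonzero inputs give non-orthogonal outputs iff the kernel of `σ` contains
no nonzero product vector `u ⊗ v`. -/
theorem trace_outputs_eq_choi_pairing
    {m n κ : ℕ} (A : Fin κ → Matrix (Fin n) (Fin m) ℂ) (hA : IsKraus A) :
    (∀ ψ φ : Fin m → ℂ,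
      Matrix.trace (applyKraus A (outer ψ) * applyKraus A (outer φ)) =
        Matrix.trace (choiAdjComp A *
          Matrix.kroneckerMap (· * ·) (outer φ)ᵀ (outer ψ))) ∧
    ((∀ ψ φ : Fin m → ℂ, ψ ≠ 0 → φ ≠ 0 →
        Matrix.trace (applyKraus A (outer ψ) * applyKraus A (outer φ)) ≠ 0) ↔
      (∀ u v : Fin m → ℂ, u ≠ 0 → v ≠ 0 →
        choiAdjComp A *ᵥ (fun p => u p.1 * v p.2) ≠ 0)) :=
  trace_outputs_eq_choi_pairing_general A
end
end

section
/- For all positive integers dA, dB, d, k with d ≤ dA·dB, there exists a family 𝒫 of real polynomials in the 2·d·dA·dB real coordinates (real and imaginary parts) of a d-tuple (v_1, …, v_d) of vectors in ℂ^{dA} ⊗ ℂ^{dB} such that: a tuple (v_1, …, v_d) of linearly independent vectors is a common zero of all polynomials in 𝒫 if and only if the subspace S = span{v_1, …, v_d} is k-extendible (i.e. some nonzero product vector across the k-copy bipartition is orthogonal to S^{⊗k}). In other words, the set of linearly independent d-tuples spanning a k-extendible subspace is the intersection of a real Zariski-closed (algebraic) set with the set of linearly independent tuples. -/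
open Matrix

noncomputable section

/-- The real coordinates of a `d`-tuple of vectors in `ℂ^{dA} ⊗ ℂ^{dB}`: the real
part (`true`) and imaginary part (`false`) of each complex entry. -/
def realCoords {d dA dB : ℕ} (v : Fin d → (Fin dA × Fin dB) → ℂ) :
    Fin d × (Fin dA × Fin dB) × Bool → ℝ :=
  fun x => if x.2.2 then (v x.1 x.2.1).re else (v x.1 x.2.1).im

/-- The subspace of `dA×dB` matrices spanned by a tuple of vectors in
`ℂ^{dA} ⊗ ℂ^{dB}`, under the identification of bipartite vectors with matrices. -/
def spanOfTuple {d dA dB : ℕ} (v : Fin d → (Fin dA × Fin dB) → ℂ) :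
    Submodule ℂ (Matrix (Fin dA) (Fin dB) ℂ) :=
  Submodule.span ℂ (Set.range fun t => Matrix.of fun i j => v t (i, j))

/-!
The span `S` of `v` is `k`-extendible iff some nonzero `X : (Fin k → Fin dA) × (Fin k → Fin dB) → ℂ`
is a common zero of the `2 × 2` minors (which make `X` a product vector `u ⊗ w`) and of the linear
forms `X ↦ ⟪v_{T 1} ⊗ ⋯ ⊗ v_{T k}, X⟫`, `T : Fin k → Fin d`; by multilinearity these vanish iff
`X` is orthogonal to all of `S^{⊗k}`.

These generators `f_i` are homogeneous, so by the Nullstellensatz they have no nonzero common zero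
iff for some degree `n` every monomial of degree `n` is a combination of the products `X^β f_i` of
degree `n`, i.e. iff the Macaulay matrix `U_n` holding the coefficients of these products has
trivial left kernel, i.e. iff `det (U_n U_nᴴ) ≠ 0`. The entries of `U_n` are polynomials in the
conjugated entries of `v`, so `det (U_n U_nᴴ)` is a polynomial in the real coordinates of `v`; as
the determinant of a Hermitian matrix it is real, so its real part alone cuts out its zeros.
-/

namespace MvPolynomial

abbrev exponentsOfDegree (σ : Type*) [Fintype σ] [DecidableEq σ] (n : ℕ) : Finset (σ →₀ ℕ) :=
  Finset.univ.finsuppAntidiag n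

theorem X_mem_radical_of_forall_eval_eq_zero {σ ι K : Type*} [Finite σ] [Field K]
    [IsAlgClosed K] {f : ι → MvPolynomial σ K}
    (h : ∀ x : σ → K, (∀ i, eval x (f i) = 0) → x = 0) (i : σ) :
    X i ∈ (Ideal.span (Set.range f)).radical := by
  rw [← vanishingIdeal_zeroLocus_eq_radical (K := K)]
  intro x hx
  obtain rfl : x = 0 := h x fun j => by
    simpa using hx (f j) (Ideal.subset_span ⟨j, rfl⟩)
  simp

variable {σ ι A : Type*} [Fintype σ] [DecidableEq σ] [CommRing A]

theorem mem_exponentsOfDegree {n : ℕ} {α : σ →₀ ℕ} :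
    α ∈ exponentsOfDegree σ n ↔ α.degree = n := by
  simp [Finsupp.degree_eq_sum]

theorem sum_coeff_mul_prod_eq_eval_homogeneousComponent (q : MvPolynomial σ A) (x : σ → A)
    (n : ℕ) :
    ∑ ρ : exponentsOfDegree σ n, coeff ρ.1 q * ρ.1.prod (fun i e => x i ^ e) =
      eval x (homogeneousComponent n q) := by
  rw [Finset.sum_coe_sort (exponentsOfDegree σ n)
    (fun ρ => coeff ρ q * ρ.prod fun i e => x i ^ e), homogeneousComponent_apply, map_sum]
  simp only [eval_monomial]
  symm
  refine Finset.sum_subset (fun α hα => ?_) (fun α _ hα => ?_)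
  · exact mem_exponentsOfDegree.mpr (Finset.mem_filter.mp hα).2
  · rw [notMem_support_iff.mp fun h => hα (Finset.mem_filter.mpr ⟨h,
      mem_exponentsOfDegree.mp ‹_›⟩), zero_mul]

variable (deg : ι → ℕ) (f : ι → MvPolynomial σ A)

def macaulayPoly (n : ℕ) (c : (i : ι) × exponentsOfDegree σ (n - deg i)) : MvPolynomial σ A :=
  monomial c.2.1 1 * f c.1

/- If `deg i > n`, the index `n - deg i` truncates to `0`, and the column `⟨i, 0⟩` holds the
coefficients of `f i`, which has none in degree `n`: such columns are zero and harmless. -/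
def macaulayMatrix (n : ℕ) :
    Matrix (exponentsOfDegree σ n) ((i : ι) × exponentsOfDegree σ (n - deg i)) A :=
  Matrix.of fun ρ c => coeff ρ.1 (macaulayPoly deg f n c)

theorem macaulayMatrix_map {B : Type*} [CommRing B] (φ : A →+* B) (n : ℕ) :
    macaulayMatrix deg (fun i => map φ (f i)) n = (macaulayMatrix deg f n).map φ := by
  ext ρ c
  rw [Matrix.map_apply, macaulayMatrix, macaulayMatrix, of_apply, of_apply, ← coeff_map,
    macaulayPoly, macaulayPoly, map_mul, map_monomial, φ.map_one]

def monomialValues (x : σ → A) (n : ℕ) : exponentsOfDegree σ n → A :=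
  fun ρ => ρ.1.prod fun i e => x i ^ e

variable {deg f}

theorem isHomogeneous_macaulayPoly (hf : ∀ i, (f i).IsHomogeneous (deg i)) (n : ℕ)
    (c : (i : ι) × exponentsOfDegree σ (n - deg i)) :
    (macaulayPoly deg f n c).IsHomogeneous (n - deg c.1 + deg c.1) :=
  (isHomogeneous_monomial _ (mem_exponentsOfDegree.mp c.2.2)).mul (hf c.1)

theorem monomialValues_vecMul_macaulayMatrix (hf : ∀ i, (f i).IsHomogeneous (deg i))
    {x : σ → A} (hx : ∀ i, eval x (f i) = 0) (n : ℕ) :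
    monomialValues x n ᵥ* macaulayMatrix deg f n = 0 := by
  ext c
  have hc : eval x (macaulayPoly deg f n c) = 0 := by
    rw [macaulayPoly, map_mul, hx, mul_zero]
  simp only [vecMul, dotProduct, monomialValues, macaulayMatrix, of_apply, mul_comm,
    sum_coeff_mul_prod_eq_eval_homogeneousComponent, Pi.zero_apply]
  rw [homogeneousComponent_of_mem ((mem_homogeneousSubmodule _ _).mpr
    (isHomogeneous_macaulayPoly hf n c))]
  split_ifs <;> simp [hc]

theorem monomialValues_ne_zero [IsDomain A] {x : σ → A} (hx : x ≠ 0) (n : ℕ) :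
    monomialValues x n ≠ 0 := by
  obtain ⟨p, hp⟩ := Function.ne_iff.mp hx
  have hmem : Finsupp.single p n ∈ exponentsOfDegree σ n := by simp
  refine Function.ne_iff.mpr ⟨⟨_, hmem⟩, ?_⟩
  simpa [monomialValues, Finsupp.prod_single_index] using pow_ne_zero n hp

theorem exists_monomial_mem_of_forall_X_mem_radical [Nonempty σ] {I : Ideal (MvPolynomial σ A)}
    (h : ∀ i, X i ∈ I.radical) : ∃ n, ∀ α ∈ exponentsOfDegree σ n, monomial α 1 ∈ I := by
  choose e he using fun i => Ideal.mem_radical_iff.mp (h i)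
  refine ⟨∑ i, e i, fun α hα => ?_⟩
  obtain ⟨i, hi⟩ : ∃ i, e i ≤ α i := by
    by_contra! hlt
    have := Finset.sum_lt_sum_of_nonempty Finset.univ_nonempty fun i _ => hlt i
    rw [← Finsupp.degree_eq_sum, mem_exponentsOfDegree.mp hα] at this
    exact lt_irrefl _ this
  rw [← add_tsub_cancel_of_le (Finsupp.single_le_iff.mpr hi), ← mul_one (1 : A),
    ← monomial_mul, ← X_pow_eq_monomial]
  exact I.mul_mem_right _ (he i)

theorem eq_zero_of_vecMul_macaulayMatrix_eq_zero {n : ℕ}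
    (hspan : ∀ ρ ∈ exponentsOfDegree σ n,
      monomial ρ 1 ∈ Submodule.span A (Set.range (macaulayPoly deg f n)))
    {y : exponentsOfDegree σ n → A} (hy : y ᵥ* macaulayMatrix deg f n = 0) : y = 0 := by
  let Φ : MvPolynomial σ A →ₗ[A] A := ∑ ρ, y ρ • lcoeff A ρ.1
  have hΦ : ∀ q, Φ q = ∑ ρ, y ρ * coeff ρ.1 q := fun q => by simp [Φ]
  have hker : Submodule.span A (Set.range (macaulayPoly deg f n)) ≤ LinearMap.ker Φ := by
    rw [Submodule.span_le]
    rintro _ ⟨c, rfl⟩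
    simpa [hΦ, vecMul, dotProduct, macaulayMatrix] using congrFun hy c
  ext ρ
  have := hker (hspan ρ.1 ρ.2)
  rw [LinearMap.mem_ker, hΦ, Finset.sum_eq_single ρ] at this
  · simpa using this
  · intro ρ' _ hρ'
    rw [coeff_monomial, if_neg (Subtype.coe_injective.ne hρ'.symm), mul_zero]
  · exact fun h => absurd (Finset.mem_univ ρ) h

variable [Fintype ι]

theorem homogeneousComponent_mem_span_macaulayPoly (hf : ∀ i, (f i).IsHomogeneous (deg i))
    {q : MvPolynomial σ A} (hq : q ∈ Ideal.span (Set.range f)) (n : ℕ) :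
    homogeneousComponent n q ∈ Submodule.span A (Set.range (macaulayPoly deg f n)) := by
  obtain ⟨c, rfl⟩ := Ideal.mem_span_range_iff_exists_fun.mp hq
  rw [map_sum]
  refine Submodule.sum_mem _ fun i _ => ?_
  rw [← support_sum_monomial_coeff (c i), Finset.sum_mul, map_sum]
  refine Submodule.sum_mem _ fun β _ => ?_
  rw [homogeneousComponent_of_mem ((mem_homogeneousSubmodule _ _).mpr
    ((isHomogeneous_monomial _ rfl).mul (hf i)))]
  split_ifs with hdeg
  · have hβ : β ∈ exponentsOfDegree σ (n - deg i) := mem_exponentsOfDegree.mpr (by omega)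
    have : monomial β (coeff β (c i)) * f i =
        coeff β (c i) • macaulayPoly deg f n ⟨i, β, hβ⟩ := by
      rw [macaulayPoly, ← smul_mul_assoc, smul_monomial, smul_eq_mul, mul_one]
    rw [this]
    exact Submodule.smul_mem _ _ (Submodule.subset_span ⟨_, rfl⟩)
  · exact Submodule.zero_mem _

theorem exists_ne_zero_forall_eval_eq_zero_iff [Nonempty σ] {f : ι → MvPolynomial σ ℂ}
    (hf : ∀ i, (f i).IsHomogeneous (deg i)) :
    (∃ x ≠ 0, ∀ i, eval x (f i) = 0) ↔
      ∀ n, (macaulayMatrix deg f n * (macaulayMatrix deg f n)ᴴ).det = 0 := by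
  open scoped ComplexOrder in
  simp_rw [← exists_vecMul_eq_zero_iff, vecMul_self_mul_conjTranspose_eq_zero]
  constructor
  · rintro ⟨x, hx, hfx⟩ n
    exact ⟨_, monomialValues_ne_zero hx n, monomialValues_vecMul_macaulayMatrix hf hfx n⟩
  · intro hker
    by_contra hzero
    obtain ⟨n, hn⟩ := exists_monomial_mem_of_forall_X_mem_radical
      (X_mem_radical_of_forall_eval_eq_zero fun x hx => by_contra fun hx0 => hzero ⟨x, hx0, hx⟩)
    obtain ⟨y, hy, hyU⟩ := hker n
    refine hy (eq_zero_of_vecMul_macaulayMatrix_eq_zero (fun α hα => ?_) hyU)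
    rw [← homogeneousComponent_eq_self (isHomogeneous_monomial _ (mem_exponentsOfDegree.mp hα))]
    exact homogeneousComponent_mem_span_macaulayPoly hf (hn α hα) n

end MvPolynomial

open MvPolynomial

theorem MultilinearMap.map_eq_zero_of_forall_mem_span {R ι κ M N : Type*} [CommSemiring R]
    [Fintype ι] [DecidableEq ι] [Fintype κ] [AddCommMonoid M] [Module R M] [AddCommMonoid N]
    [Module R N] (g : MultilinearMap R (fun _ : ι => M) N) {w : κ → M}
    (hg : ∀ T : ι → κ, g (w ∘ T) = 0) {m : ι → M}
    (hm : ∀ t, m t ∈ Submodule.span R (Set.range w)) : g m = 0 := by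
  choose c hc using fun t => (Submodule.mem_span_range_iff_exists_fun R).mp (hm t)
  obtain rfl : m = fun t => ∑ s, c t s • w s := funext fun t => (hc t).symm
  rw [g.map_sum]
  exact Finset.sum_eq_zero fun T _ => by rw [g.map_smul_univ, ← Function.comp_def, hg, smul_zero]

theorem Matrix.exists_eq_vecMulVec_iff {K α β : Type*} [Field K] (Y : Matrix α β K) :
    (∃ u w, u ≠ 0 ∧ w ≠ 0 ∧ Y = vecMulVec u w) ↔
      Y ≠ 0 ∧ ∀ i i' j j', Y i j * Y i' j' = Y i j' * Y i' j := by
  constructor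
  · rintro ⟨u, w, hu, hw, rfl⟩
    obtain ⟨i, hi⟩ := Function.ne_iff.mp hu
    obtain ⟨j, hj⟩ := Function.ne_iff.mp hw
    refine ⟨fun h => mul_ne_zero hi hj (by simpa [vecMulVec_apply] using congrFun₂ h i j),
      fun _ _ _ _ => ?_⟩
    simp only [vecMulVec_apply]
    ring
  · rintro ⟨hY, hminor⟩
    obtain ⟨i₀, j₀, h₀⟩ : ∃ i j, Y i j ≠ 0 := by
      by_contra! h
      exact hY (Matrix.ext h)
    refine ⟨fun i => Y i j₀, fun j => Y i₀ j / Y i₀ j₀, Function.ne_iff.mpr ⟨i₀, h₀⟩,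
      Function.ne_iff.mpr ⟨j₀, by simp [div_self h₀]⟩, Matrix.ext fun i j => ?_⟩
    rw [vecMulVec_apply, mul_div_assoc', ← hminor, mul_div_cancel_right₀ _ h₀]

theorem frobInner_eq_sum {α β : Type*} [Fintype α] [Fintype β] (M N : Matrix α β ℂ) :
    frobInner M N = ∑ i, ∑ j, star (M i j) * N i j := by
  rw [frobInner, trace, Finset.sum_comm]
  simp [mul_apply]

theorem star_frobInner {α β : Type*} [Fintype α] [Fintype β] (M N : Matrix α β ℂ) :
    star (frobInner M N) = frobInner N M := by
  rw [frobInner, frobInner, ← trace_conjTranspose, conjTranspose_mul, conjTranspose_conjTranspose]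

theorem frobInner_kronPow_eq_zero_of_mem_span {a b k : ℕ} {κ : Type*} [Fintype κ]
    {W : κ → Matrix (Fin a) (Fin b) ℂ} {Y : Matrix (Fin k → Fin a) (Fin k → Fin b) ℂ}
    (hW : ∀ T : Fin k → κ, frobInner (kronPow k fun t => W (T t)) Y = 0)
    {M : Fin k → Matrix (Fin a) (Fin b) ℂ} (hM : ∀ t, M t ∈ Submodule.span ℂ (Set.range W)) :
    frobInner (kronPow k M) Y = 0 := by
  -- `frobInner (kronPow k M) Y` is conjugate-linear in each `M t`; its conjugate is multilinear.
  let g : MultilinearMap ℂ (fun _ : Fin k => Matrix (Fin a) (Fin b) ℂ) ℂ :=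
    ∑ i, ∑ j, star (Y i j) • (MultilinearMap.mkPiAlgebra ℂ (Fin k) ℂ).compLinearMap
      fun t => entryLinearMap ℂ ℂ (i t) (j t)
  have hg : ∀ N, g N = frobInner Y (kronPow k N) := fun N => by
    simp [g, frobInner_eq_sum, kronPow]
  have hgW (T : Fin k → κ) : g (W ∘ T) = 0 := by
    rw [hg, ← star_frobInner, Function.comp_def, hW, star_zero]
  rw [← star_frobInner, ← hg, g.map_eq_zero_of_forall_mem_span hgW hM, star_zero]

section Extendibility

variable {d dA dB : ℕ} {A : Type*} [CommRing A]

abbrev KronIndex (dA dB k : ℕ) := (Fin k → Fin dA) × (Fin k → Fin dB)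

abbrev ExtendibilityIndex (dA dB d k : ℕ) :=
  (KronIndex dA dB k × KronIndex dA dB k) ⊕ (Fin k → Fin d)

def extendibilityDeg (dA dB d k : ℕ) : ExtendibilityIndex dA dB d k → ℕ :=
  Sum.elim (fun _ => 2) (fun _ => 1)

def extendibilityGens (k : ℕ) (w : Fin d → Fin dA × Fin dB → A) :
    ExtendibilityIndex dA dB d k → MvPolynomial (KronIndex dA dB k) A
  | .inl (p, q) => X p * X q - X (p.1, q.2) * X (q.1, p.2)
  | .inr T => ∑ p, C (∏ t, w (T t) (p.1 t, p.2 t)) * X p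

theorem isHomogeneous_extendibilityGens (k : ℕ) (w : Fin d → Fin dA × Fin dB → A)
    (γ : ExtendibilityIndex dA dB d k) :
    (extendibilityGens k w γ).IsHomogeneous (extendibilityDeg dA dB d k γ) := by
  rcases γ with ⟨p, q⟩ | T
  · exact ((isHomogeneous_X _ _).mul (isHomogeneous_X _ _)).sub
      ((isHomogeneous_X _ _).mul (isHomogeneous_X _ _))
  · exact IsHomogeneous.sum _ _ _ fun p _ => isHomogeneous_C_mul_X _ _

abbrev extendibilityMacaulay (k n : ℕ) (w : Fin d → Fin dA × Fin dB → A) :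
    Matrix (exponentsOfDegree (KronIndex dA dB k) n)
      ((γ : ExtendibilityIndex dA dB d k) ×
        exponentsOfDegree (KronIndex dA dB k) (n - extendibilityDeg dA dB d k γ)) A :=
  macaulayMatrix (extendibilityDeg dA dB d k) (extendibilityGens k w) n

theorem extendibilityMacaulay_map {B : Type*} [CommRing B] (φ : A →+* B) (k n : ℕ)
    (w : Fin d → Fin dA × Fin dB → A) :
    (extendibilityMacaulay k n w).map φ = extendibilityMacaulay k n fun s e => φ (w s e) := by
  rw [← macaulayMatrix_map]
  congr 1
  ext1 γ
  rcases γ with ⟨p, q⟩ | T <;> simp [extendibilityGens]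

theorem frobInner_kronPow_eq_eval_extendibilityGens (k : ℕ) (v : Fin d → Fin dA × Fin dB → ℂ)
    (T : Fin k → Fin d) (Y : Matrix (Fin k → Fin dA) (Fin k → Fin dB) ℂ) :
    frobInner (kronPow k fun t => of fun i j => v (T t) (i, j)) Y =
      eval (fun p => Y p.1 p.2) (extendibilityGens k (star v) (.inr T)) := by
  simp [extendibilityGens, frobInner_eq_sum, kronPow, Fintype.sum_prod_type, map_prod]

theorem not_kUnextendible_spanOfTuple_iff (k : ℕ) (v : Fin d → Fin dA × Fin dB → ℂ) :
    ¬ KUnextendible (spanOfTuple v : Set (Matrix (Fin dA) (Fin dB) ℂ)) k ↔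
      ∃ x ≠ 0, ∀ γ, eval x (extendibilityGens k (star v) γ) = 0 := by
  have horth_iff (Y : Matrix (Fin k → Fin dA) (Fin k → Fin dB) ℂ) :
      (∀ M : Fin k → Matrix (Fin dA) (Fin dB) ℂ, (∀ t, M t ∈ spanOfTuple v) →
        frobInner (kronPow k M) Y = 0) ↔
      ∀ T, eval (fun p => Y p.1 p.2) (extendibilityGens k (star v) (.inr T)) = 0 :=
    ⟨fun h T => frobInner_kronPow_eq_eval_extendibilityGens k v T Y ▸
        h _ fun t => Submodule.subset_span ⟨T t, rfl⟩,
      fun h _ => frobInner_kronPow_eq_zero_of_mem_span (W := fun s => of fun i j => v s (i, j))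
        fun T => (frobInner_kronPow_eq_eval_extendibilityGens k v T Y).trans (h T)⟩
  have eval_minor (Y : Matrix (Fin k → Fin dA) (Fin k → Fin dB) ℂ) (p q) :
      eval (fun p => Y p.1 p.2) (extendibilityGens k (star v) (.inl (p, q))) =
        Y p.1 p.2 * Y q.1 q.2 - Y p.1 q.2 * Y q.1 p.2 := by
    simp [extendibilityGens]
  simp only [KUnextendible, SetLike.mem_coe]
  push Not
  constructor
  · rintro ⟨u, w, hu, hw, horth⟩
    obtain ⟨hY, hminor⟩ := (exists_eq_vecMulVec_iff (vecMulVec u w)).mp ⟨u, w, hu, hw, rfl⟩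
    refine ⟨fun p => vecMulVec u w p.1 p.2, fun h => hY (Matrix.ext fun i j => congrFun h (i, j)),
      ?_⟩
    rintro (⟨p, q⟩ | T)
    · rw [eval_minor, hminor, sub_self]
    · exact (horth_iff _).mp horth T
  · rintro ⟨x, hx, hgens⟩
    obtain ⟨u, w, hu, hw, hY⟩ := (exists_eq_vecMulVec_iff (of fun i j => x (i, j))).mpr
      ⟨fun h => hx (funext fun p => congrFun₂ h p.1 p.2), fun i i' j j' =>
        sub_eq_zero.mp ((eval_minor _ (i, j) (i', j')).symm.trans (hgens (.inl _)))⟩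
    exact ⟨u, w, hu, hw, hY ▸ (horth_iff _).mpr fun T => hgens (.inr T)⟩

end Extendibility

def MvPolynomial.rePart {σ : Type*} (P : MvPolynomial σ ℂ) : MvPolynomial σ ℝ :=
  ∑ α ∈ P.support, monomial α (P.coeff α).re

theorem MvPolynomial.eval_rePart {σ : Type*} (P : MvPolynomial σ ℂ) (y : σ → ℝ) :
    eval y P.rePart = (eval (fun i => (y i : ℂ)) P).re := by
  rw [rePart, map_sum, eval_eq, Complex.re_sum]
  refine Finset.sum_congr rfl fun α _ => ?_
  simp [eval_monomial, Finsupp.prod, ← Complex.ofReal_pow, ← Complex.ofReal_prod]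

section RealCoordinates

variable {d dA dB : ℕ}

def entryPolys (d dA dB : ℕ) :
    Fin d → Fin dA × Fin dB → MvPolynomial (Fin d × (Fin dA × Fin dB) × Bool) ℂ :=
  fun s e => X (s, e, true) + C Complex.I * X (s, e, false)

def conjEntryPolys (d dA dB : ℕ) :
    Fin d → Fin dA × Fin dB → MvPolynomial (Fin d × (Fin dA × Fin dB) × Bool) ℂ :=
  fun s e => X (s, e, true) - C Complex.I * X (s, e, false)

theorem eval_entryPolys (v : Fin d → Fin dA × Fin dB → ℂ) :
    (fun s e => eval (fun x => (realCoords v x : ℂ)) (entryPolys d dA dB s e)) = v := by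
  ext s e
  simp [entryPolys, realCoords, mul_comm Complex.I]

theorem eval_conjEntryPolys (v : Fin d → Fin dA × Fin dB → ℂ) :
    (fun s e => eval (fun x => (realCoords v x : ℂ)) (conjEntryPolys d dA dB s e)) = star v := by
  ext s e
  apply Complex.ext <;> simp [conjEntryPolys, realCoords]

def gramPoly (dA dB d k n : ℕ) : MvPolynomial (Fin d × (Fin dA × Fin dB) × Bool) ℝ :=
  rePart (extendibilityMacaulay k n (conjEntryPolys d dA dB) *
    (extendibilityMacaulay k n (entryPolys d dA dB))ᵀ).det

theorem eval_gramPoly_eq_zero_iff (k n : ℕ) (v : Fin d → Fin dA × Fin dB → ℂ) :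
    eval (realCoords v) (gramPoly dA dB d k n) = 0 ↔
      (extendibilityMacaulay k n (star v) * (extendibilityMacaulay k n (star v))ᴴ).det = 0 := by
  set U := extendibilityMacaulay k n (star v)
  have hconj : (extendibilityMacaulay k n v)ᵀ = Uᴴ := by
    have := extendibilityMacaulay_map (starRingEnd ℂ) k n (star v)
    simp only [Pi.star_apply, starRingEnd_apply, star_star] at this
    rw [← this]
    rfl
  have hdet : eval (fun x => (realCoords v x : ℂ))
      (extendibilityMacaulay k n (conjEntryPolys d dA dB) *
        (extendibilityMacaulay k n (entryPolys d dA dB))ᵀ).det =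
        (U * Uᴴ).det := by
    rw [RingHom.map_det, RingHom.mapMatrix_apply, Matrix.map_mul, transpose_map,
      extendibilityMacaulay_map, extendibilityMacaulay_map, eval_entryPolys, eval_conjEntryPolys,
      ← hconj]
  have hreal : ((U * Uᴴ).det.re : ℂ) = (U * Uᴴ).det := by
    rw [← Complex.conj_eq_iff_re, starRingEnd_apply, ← det_conjTranspose, conjTranspose_mul,
      conjTranspose_conjTranspose]
  rw [gramPoly, eval_rePart, hdet, ← Complex.ofReal_eq_zero, hreal]

end RealCoordinates

theorem kExtendible_is_algebraic_general
    (dA dB d k : ℕ) (hdA : 0 < dA) (hdB : 0 < dB) :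
    ∃ Polys : Set (MvPolynomial (Fin d × (Fin dA × Fin dB) × Bool) ℝ),
      ∀ v : Fin d → (Fin dA × Fin dB) → ℂ, LinearIndependent ℂ v →
        ((∀ p ∈ Polys, MvPolynomial.eval (realCoords v) p = 0) ↔
          ¬ KUnextendible (spanOfTuple v : Set (Matrix (Fin dA) (Fin dB) ℂ)) k) := by
  have : Nonempty (KronIndex dA dB k) := ⟨(fun _ => ⟨0, hdA⟩, fun _ => ⟨0, hdB⟩)⟩
  refine ⟨Set.range (gramPoly dA dB d k), fun v _ => ?_⟩
  rw [not_kUnextendible_spanOfTuple_iff,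
    exists_ne_zero_forall_eval_eq_zero_iff (isHomogeneous_extendibilityGens k (star v)),
    Set.forall_mem_range]
  exact forall_congr' fun n => eval_gramPoly_eq_zero_iff k n v

/-- **`k`-extendibility is a real algebraic condition (Lemma 3 of the paper).**
There is a family of real polynomials in the real coordinates of a `d`-tuple of
vectors in `ℂ^{dA} ⊗ ℂ^{dB}` whose common zeros, among linearly independent tuples,
are exactly the tuples spanning a `k`-extendible subspace. -/
theorem kExtendible_is_algebraic
    (dA dB d k : ℕ) (hdA : 0 < dA) (hdB : 0 < dB) (hd : 0 < d) (hk : 0 < k)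
    (hdim : d ≤ dA * dB) :
    ∃ Polys : Set (MvPolynomial (Fin d × (Fin dA × Fin dB) × Bool) ℝ),
      ∀ v : Fin d → (Fin dA × Fin dB) → ℂ, LinearIndependent ℂ v →
        ((∀ p ∈ Polys, MvPolynomial.eval (realCoords v) p = 0) ↔
          ¬ KUnextendible (spanOfTuple v : Set (Matrix (Fin dA) (Fin dB) ℂ)) k) :=
  kExtendible_is_algebraic_general dA dB d k hdA hdB
end
end

section
/- Let {R_i} be a finite set of rank-one matrices in the space of a1×b1 complex matrices such that no nonzero matrix of rank at most 1 is Frobenius-orthogonal to every R_i (an unextendible product basis), and let {T_j} be a finite set of rank-one a2×b2 complex matrices with the same property. Then the set of Kronecker products {R_i ⊗ T_j} (rank-one matrices of size a1·a2 × b1·b2) again has the property that no nonzero matrix of rank at most 1 is Frobenius-orthogonal to every R_i ⊗ T_j; that is, the tensor product of two unextendible product bases is an unextendible product basis. -/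
/-!
Let `u vᵀ` be a nonzero product matrix on the composite system. Some slices `u(·, q)` and
`v(·, t)` are nonzero, so the first UPB contains a product `R i = a bᵀ` not orthogonal to
`u(·, q) v(·, t)ᵀ`, i.e. `⟨a, u(·, q)⟩ ⟨b, v(·, t)⟩ ≠ 0`. Contracting `u` with `a` and `v`
with `b` therefore gives nonzero vectors `x`, `y`, and `⟨R i ⊗ T j, u vᵀ⟩ = ⟨T j, x yᵀ⟩`,
so the second UPB supplies the `j`.
-/

open Matrix

noncomputable section

/-- A family of matrices is an unextendible product basis (for the property that
matters here) if no nonzero matrix of rank at most one — equivalently, no outer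
product `u vᵀ` with `u ≠ 0` and `v ≠ 0` — is Frobenius-orthogonal to every member
of the family. -/
def IsUPB {α β ι : Type*} [Fintype α] [Fintype β] (R : ι → Matrix α β ℂ) : Prop :=
  ∀ (u : α → ℂ) (v : β → ℂ), u ≠ 0 → v ≠ 0 →
    ∃ i, frobInner (R i) (Matrix.vecMulVec u v) ≠ 0

theorem Matrix.exists_eq_vecMulVec_of_rank_le_one {K m n : Type*} [Field K] [Fintype n]
    (M : Matrix m n K) (h : M.rank ≤ 1) : ∃ a b, M = vecMulVec a b := by
  classical
  obtain ⟨w, hw⟩ := finrank_le_one_iff.mp h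
  choose c hc using fun s => hw ⟨M *ᵥ Pi.single s 1, LinearMap.mem_range_self _ _⟩
  refine ⟨w, c, ext fun p s => ?_⟩
  have hcol := congr_fun (congr_arg Subtype.val (hc s)) p
  simpa [vecMulVec_apply, mul_comm] using hcol.symm

theorem exists_slice_ne_zero {α β M : Type*} [Zero M] {u : α × β → M} (hu : u ≠ 0) :
    ∃ q, (fun p => u (p, q)) ≠ 0 := by
  obtain ⟨⟨p, q⟩, hpq⟩ := Function.ne_iff.mp hu
  exact ⟨q, fun h => hpq (congr_fun h p)⟩

section Frobenius

variable {α₁ β₁ α₂ β₂ : Type*} [Fintype α₁] [Fintype β₁] [Fintype α₂] [Fintype β₂]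

def partialInner (a : α₁ → ℂ) (u : α₁ × α₂ → ℂ) : α₂ → ℂ :=
  fun q => star a ⬝ᵥ fun p => u (p, q)

theorem frobInner_vecMulVec_vecMulVec (a u : α₁ → ℂ) (b v : β₁ → ℂ) :
    frobInner (vecMulVec a b) (vecMulVec u v) = (star a ⬝ᵥ u) * (star b ⬝ᵥ v) := by
  simp only [frobInner, trace, diag, mul_apply, conjTranspose_apply, vecMulVec_apply,
    dotProduct, Pi.star_apply, Finset.sum_mul, Finset.mul_sum, star_mul']
  refine Finset.sum_congr rfl fun _ _ => Finset.sum_congr rfl fun _ _ => by ring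

theorem frobInner_kronecker_vecMulVec (a : α₁ → ℂ) (b : β₁ → ℂ) (T : Matrix α₂ β₂ ℂ)
    (u : α₁ × α₂ → ℂ) (v : β₁ × β₂ → ℂ) :
    frobInner (kroneckerMap (· * ·) (vecMulVec a b) T) (vecMulVec u v) =
      frobInner T (vecMulVec (partialInner a u) (partialInner b v)) := by
  simp only [frobInner, trace, diag, mul_apply, conjTranspose_apply, kroneckerMap_apply,
    vecMulVec_apply, partialInner, dotProduct, Pi.star_apply, Fintype.sum_prod_type,
    Finset.mul_sum, Finset.sum_mul, star_mul']
  rw [Finset.sum_comm]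
  refine Finset.sum_congr rfl fun _ _ => ?_
  rw [Finset.sum_congr rfl fun _ _ => Finset.sum_comm, Finset.sum_comm]
  refine Finset.sum_congr rfl fun _ _ => Finset.sum_congr rfl fun _ _ =>
    Finset.sum_congr rfl fun _ _ => by ring

end Frobenius

theorem IsUPB.kronecker {α₁ β₁ α₂ β₂ ι κ : Type*} [Fintype α₁] [Fintype β₁] [Fintype α₂]
    [Fintype β₂] {R : ι → Matrix α₁ β₁ ℂ} {T : κ → Matrix α₂ β₂ ℂ}
    (hR : IsUPB R) (hT : IsUPB T) (hR_product : ∀ i, ∃ a b, R i = vecMulVec a b) :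
    IsUPB (fun ij : ι × κ => kroneckerMap (· * ·) (R ij.1) (T ij.2)) := by
  intro u v hu hv
  obtain ⟨q, hq⟩ := exists_slice_ne_zero hu
  obtain ⟨t, ht⟩ := exists_slice_ne_zero hv
  obtain ⟨i, hi⟩ := hR _ _ hq ht
  obtain ⟨a, b, hab⟩ := hR_product i
  rw [hab, frobInner_vecMulVec_vecMulVec, mul_ne_zero_iff] at hi
  obtain ⟨j, hj⟩ := hT (partialInner a u) (partialInner b v)
    (Function.ne_iff.mpr ⟨q, hi.1⟩) (Function.ne_iff.mpr ⟨t, hi.2⟩)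
  exact ⟨(i, j), by simpa only [hab, frobInner_kronecker_vecMulVec]⟩

theorem tensor_of_UPBs_is_UPB_general
    {a₁ b₁ a₂ b₂ r₁ r₂ : ℕ}
    (R : Fin r₁ → Matrix (Fin a₁) (Fin b₁) ℂ) (T : Fin r₂ → Matrix (Fin a₂) (Fin b₂) ℂ)
    (hRrank : ∀ i, (R i).rank = 1)
    (hR : IsUPB R) (hT : IsUPB T) :
    IsUPB (fun ij : Fin r₁ × Fin r₂ =>
      Matrix.kroneckerMap (· * ·) (R ij.1) (T ij.2)) :=
  hR.kronecker hT fun i => (R i).exists_eq_vecMulVec_of_rank_le_one (hRrank i).le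

/-- **The tensor product of two unextendible product bases is an unextendible
product basis (Lemma 6 of the paper).** -/
theorem tensor_of_UPBs_is_UPB
    {a₁ b₁ a₂ b₂ r₁ r₂ : ℕ}
    (R : Fin r₁ → Matrix (Fin a₁) (Fin b₁) ℂ) (T : Fin r₂ → Matrix (Fin a₂) (Fin b₂) ℂ)
    (hRrank : ∀ i, (R i).rank = 1) (hTrank : ∀ j, (T j).rank = 1)
    (hR : IsUPB R) (hT : IsUPB T) :
    IsUPB (fun ij : Fin r₁ × Fin r₂ =>
      Matrix.kroneckerMap (· * ·) (R ij.1) (T ij.2)) :=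
  tensor_of_UPBs_is_UPB_general R T hRrank hR hT
end
end
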